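/- arXiv:2410.14894 — 5 statements merged into one kernel-verified Lean document; each statement's English description precedes it below -/
import Mathlib

section
/- Let E and W be real inner product spaces, R : E → ℝ differentiable with L-Lipschitz gradient ∇R (L > 0), and let 𝓛 : E × W → ℝ be differentiable in its first argument with gradient ∇_θ𝓛(θ; w) ∈ E. Let (θ_t)_{t≥0} in E and (w_t)_{t≥0} in W be sequences satisfying the update rule θ_{t+1} = θ_t − μ·∇_θ𝓛(θ_t; w_{t+1}) for all t, where μ ≥ 0. Suppose there is a constant k > 0 such that for every t, ⟨∇R(θ_t), ∇_θ𝓛(θ_t; w_{t+1})⟩ ≥ k·‖∇_θ𝓛(θ_t; w_{t+1})‖². If μ ≤ 2k/L, then the risk decreases monotonically: R(θ_{t+1}) ≤ R(θ_t) for every t. -/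
/-!
Along the segment `s ↦ x + s • v` the Lipschitz gradient lets the slope of `R` exceed
`⟪R' x, v⟫` by at most `L s ‖v‖²`, which gives the descent lemma
`R (x + v) ≤ R x + ⟪R' x, v⟫ + L/2 ‖v‖²`. For the step `v = -μ g` the linear term gains at least
`μ k ‖g‖²`, while the quadratic term costs `μ² L/2 ‖g‖² ≤ μ k ‖g‖²` as soon as `μ ≤ 2k/L`.
-/

open RealInnerProductSpace Set

section LipschitzGradient

variable {E : Type*} [NormedAddCommGroup E] [InnerProductSpace ℝ E]
  {R : E → ℝ} {R' : E → E} {L : ℝ}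

theorem hasDerivAt_comp_add_smul (hR : ∀ x, HasFDerivAt R (innerSL ℝ (R' x)) x) (x v : E)
    (s : ℝ) : HasDerivAt (fun s : ℝ => R (x + s • v)) ⟪R' (x + s • v), v⟫ s := by
  have hline : HasDerivAt (fun s : ℝ => x + s • v) v s := by
    simpa using ((hasDerivAt_id s).smul_const v).const_add x
  exact (hR (x + s • v)).comp_hasDerivAt s hline

theorem inner_sub_le_of_lipschitz (hRlip : ∀ x y, ‖R' x - R' y‖ ≤ L * ‖x - y‖) (x v : E)
    {s : ℝ} (hs : 0 ≤ s) : ⟪R' (x + s • v), v⟫ ≤ ⟪R' x, v⟫ + L * s * ‖v‖ ^ 2 := by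
  have h : ⟪R' (x + s • v) - R' x, v⟫ ≤ L * s * ‖v‖ ^ 2 :=
    calc ⟪R' (x + s • v) - R' x, v⟫ ≤ ‖R' (x + s • v) - R' x‖ * ‖v‖ := real_inner_le_norm _ _
      _ ≤ L * ‖(x + s • v) - x‖ * ‖v‖ := by gcongr; exact hRlip _ _
      _ = L * s * ‖v‖ ^ 2 := by
        rw [add_sub_cancel_left, norm_smul, Real.norm_of_nonneg hs]; ring
  rw [inner_sub_left] at h
  linarith

theorem le_add_inner_add_sq_of_lipschitz_gradient
    (hR : ∀ x, HasFDerivAt R (innerSL ℝ (R' x)) x)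
    (hRlip : ∀ x y, ‖R' x - R' y‖ ≤ L * ‖x - y‖) (x v : E) :
    R (x + v) ≤ R x + ⟪R' x, v⟫ + L / 2 * ‖v‖ ^ 2 := by
  have hB : ∀ s : ℝ, HasDerivAt (fun s => R x + s * ⟪R' x, v⟫ + L / 2 * ‖v‖ ^ 2 * s ^ 2)
      (⟪R' x, v⟫ + L * s * ‖v‖ ^ 2) s := fun s =>
    ((((hasDerivAt_id' s).mul_const _).const_add _).add
      ((hasDerivAt_pow 2 s).const_mul _)).congr_deriv (by push_cast; ring)
  have key := image_le_of_deriv_right_le_deriv_boundary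
    (fun s _ => (hasDerivAt_comp_add_smul hR x v s).continuousAt.continuousWithinAt)
    (fun s _ => (hasDerivAt_comp_add_smul hR x v s).hasDerivWithinAt)
    (by simp) (fun s _ => (hB s).continuousAt.continuousWithinAt)
    (fun s _ => (hB s).hasDerivWithinAt)
    (fun s hs => inner_sub_le_of_lipschitz hRlip x v hs.1) (right_mem_Icc.2 zero_le_one)
  simpa using key

theorem le_of_gradient_step (hR : ∀ x, HasFDerivAt R (innerSL ℝ (R' x)) x)
    (hRlip : ∀ x y, ‖R' x - R' y‖ ≤ L * ‖x - y‖) {x g : E} {μ k : ℝ} (hμ : 0 ≤ μ)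
    (hμL : μ * L ≤ 2 * k) (hinner : k * ‖g‖ ^ 2 ≤ ⟪R' x, g⟫) :
    R (x - μ • g) ≤ R x := by
  have hdesc := le_add_inner_add_sq_of_lipschitz_gradient hR hRlip x (-(μ • g))
  rw [← sub_eq_add_neg, inner_neg_right, real_inner_smul_right, norm_neg, norm_smul,
    Real.norm_of_nonneg hμ] at hdesc
  have hgain : μ * (k * ‖g‖ ^ 2) ≤ μ * ⟪R' x, g⟫ := mul_le_mul_of_nonneg_left hinner hμ
  have hloss : μ * (μ * L) * ‖g‖ ^ 2 ≤ μ * (2 * k) * ‖g‖ ^ 2 := by gcongr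
  nlinarith

end LipschitzGradient

theorem bilevel_convergence_general
    {E W : Type*} [NormedAddCommGroup E] [InnerProductSpace ℝ E]
    (R : E → ℝ) (R' : E → E) (L : ℝ) (hL : 0 < L)
    (hRdiff : ∀ x, HasFDerivAt R (innerSL ℝ (R' x)) x)
    (hRlip : ∀ x y, ‖R' x - R' y‖ ≤ L * ‖x - y‖)
    (𝓛' : E → W → E)
    (θ : ℕ → E) (w : ℕ → W) (μ : ℝ) (hμ : 0 ≤ μ)
    (hupd : ∀ t, θ (t + 1) = θ t - μ • 𝓛' (θ t) (w (t + 1)))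
    (k : ℝ)
    (hinner : ∀ t, ⟪R' (θ t), 𝓛' (θ t) (w (t + 1))⟫ ≥ k * ‖𝓛' (θ t) (w (t + 1))‖ ^ 2)
    (hstep : μ ≤ 2 * k / L) :
    ∀ t, R (θ (t + 1)) ≤ R (θ t) := by
  have hμL : μ * L ≤ 2 * k := (le_div_iff₀ hL).1 hstep
  intro t
  rw [hupd t]
  exact le_of_gradient_step hRdiff hRlip hμ hμL (hinner t)

/-- **Theorem 1 (Convergence).** Under the Lipschitz-smoothness of the risk `R`
(Assumption 1) and the inner-product lower bound (Assumption 2), the inner-loop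
updates `θ_{t+1} = θ_t - μ • ∇_θ𝓛(θ_t; w_{t+1})` with step size `μ ≤ 2k/L`
make the risk monotonically decrease: `R (θ (t+1)) ≤ R (θ t)` for every `t`. -/
theorem bilevel_convergence
    {E W : Type*} [NormedAddCommGroup E] [InnerProductSpace ℝ E]
    [NormedAddCommGroup W] [InnerProductSpace ℝ W]
    (R : E → ℝ) (R' : E → E) (L : ℝ) (hL : 0 < L)
    (hRdiff : ∀ x, HasFDerivAt R (innerSL ℝ (R' x)) x)
    (hRlip : ∀ x y, ‖R' x - R' y‖ ≤ L * ‖x - y‖)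
    (𝓛 : E → W → ℝ) (𝓛' : E → W → E)
    (h𝓛diff : ∀ θ₀ w₀, HasFDerivAt (fun θ => 𝓛 θ w₀) (innerSL ℝ (𝓛' θ₀ w₀)) θ₀)
    (θ : ℕ → E) (w : ℕ → W) (μ : ℝ) (hμ : 0 ≤ μ)
    (hupd : ∀ t, θ (t + 1) = θ t - μ • 𝓛' (θ t) (w (t + 1)))
    (k : ℝ) (hk : 0 < k)
    (hinner : ∀ t, ⟪R' (θ t), 𝓛' (θ t) (w (t + 1))⟫ ≥ k * ‖𝓛' (θ t) (w (t + 1))‖ ^ 2)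
    (hstep : μ ≤ 2 * k / L) :
    ∀ t, R (θ (t + 1)) ≤ R (θ t) :=
  bilevel_convergence_general R R' L hL hRdiff hRlip 𝓛' θ w μ hμ hupd k hinner hstep
end

section
/- Let E and W be real inner product spaces, R : E → ℝ differentiable with L-Lipschitz gradient ∇R (L ≥ 0) and ‖∇R(x)‖ ≤ σ for all x ∈ E, and 𝓛 : E × W → ℝ differentiable in its first argument with ‖∇_θ𝓛(θ; w)‖ ≤ σ for all θ, w. Fix μ ≥ 0 and define F(θ, w) = θ − μ·∇_θ𝓛(θ; w). If θ = θ' − μ·∇_θ𝓛(θ'; w₀) for some w₀ ∈ W, then for every w ∈ W, R(F(θ, w)) − R(F(θ', w)) ≤ 3·μ·σ² + (9/2)·L·μ²·σ². -/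
open RealInnerProductSpace

/-- Eqn. (27) in the proof of Theorem 2: with `R` Lipschitz-smooth with constant `L`
and `‖∇R‖ ≤ σ`, `‖∇_θ𝓛‖ ≤ σ`, `F θ w = θ - μ • ∇_θ𝓛(θ; w)`, and
`θ = θ' - μ • ∇_θ𝓛(θ'; w₀)`, we have
`R (F θ w) - R (F θ' w) ≤ 3 μ σ² + (9/2) L μ² σ²` for every `w`. -/
theorem risk_one_step_difference_bound
    {E W : Type*} [NormedAddCommGroup E] [InnerProductSpace ℝ E]
    [NormedAddCommGroup W] [InnerProductSpace ℝ W]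
    (R : E → ℝ) (R' : E → E) (L σ : ℝ) (hL : 0 ≤ L)
    (hRdiff : ∀ x, HasFDerivAt R (innerSL ℝ (R' x)) x)
    (hRlip : ∀ x y, ‖R' x - R' y‖ ≤ L * ‖x - y‖)
    (hRbound : ∀ x, ‖R' x‖ ≤ σ)
    (𝓛 : E → W → ℝ) (𝓛' : E → W → E)
    (h𝓛diff : ∀ θ₀ w₀, HasFDerivAt (fun θ => 𝓛 θ w₀) (innerSL ℝ (𝓛' θ₀ w₀)) θ₀)
    (h𝓛bound : ∀ θ₀ w₀, ‖𝓛' θ₀ w₀‖ ≤ σ)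
    (μ : ℝ) (hμ : 0 ≤ μ)
    (F : E → W → E) (hF : ∀ θ₀ w₀, F θ₀ w₀ = θ₀ - μ • 𝓛' θ₀ w₀)
    (θ θ' : E) (w₀ : W) (hθ : θ = θ' - μ • 𝓛' θ' w₀) :
    ∀ w, R (F θ w) - R (F θ' w) ≤ 3 * μ * σ ^ 2 + (9 / 2) * L * μ ^ 2 * σ ^ 2 := by
  intro w
  have hσ : 0 ≤ σ := le_trans (norm_nonneg _) (hRbound θ)
  -- mean value inequality: |R x - R y| ≤ σ ‖x - y‖
  have hmv : ∀ x y : E, R x - R y ≤ σ * ‖x - y‖ := by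
    intro x y
    have := Convex.norm_image_sub_le_of_norm_hasFDerivWithin_le
      (f := R) (f' := fun z => innerSL ℝ (R' z)) (C := σ) (s := (Set.univ : Set E))
      (fun z _ => (hRdiff z).hasFDerivWithinAt)
      (fun z _ => by simpa using hRbound z) convex_univ (Set.mem_univ y) (Set.mem_univ x)
    calc R x - R y ≤ ‖R x - R y‖ := le_abs_self _
      _ ≤ σ * ‖x - y‖ := this
  have hdist : ‖F θ w - F θ' w‖ ≤ 3 * μ * σ := by
    have hθθ' : ‖θ - θ'‖ ≤ μ * σ := by
      rw [hθ]
      simp only [sub_sub_cancel_left, norm_neg, norm_smul, Real.norm_eq_abs,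
        abs_of_nonneg hμ]
      exact mul_le_mul_of_nonneg_left (h𝓛bound θ' w₀) hμ
    have h1 : F θ w - F θ' w = (θ - θ') - μ • 𝓛' θ w + μ • 𝓛' θ' w := by
      rw [hF, hF]; abel
    rw [h1]
    calc ‖(θ - θ') - μ • 𝓛' θ w + μ • 𝓛' θ' w‖
        ≤ ‖(θ - θ') - μ • 𝓛' θ w‖ + ‖μ • 𝓛' θ' w‖ := norm_add_le _ _
      _ ≤ ‖θ - θ'‖ + ‖μ • 𝓛' θ w‖ + ‖μ • 𝓛' θ' w‖ := by
          have := norm_sub_le (θ - θ') (μ • 𝓛' θ w); linarith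
      _ ≤ μ * σ + μ * σ + μ * σ := by
          have h2 : ‖μ • 𝓛' θ w‖ ≤ μ * σ := by
            rw [norm_smul, Real.norm_eq_abs, abs_of_nonneg hμ]
            exact mul_le_mul_of_nonneg_left (h𝓛bound θ w) hμ
          have h3 : ‖μ • 𝓛' θ' w‖ ≤ μ * σ := by
            rw [norm_smul, Real.norm_eq_abs, abs_of_nonneg hμ]
            exact mul_le_mul_of_nonneg_left (h𝓛bound θ' w) hμ
          linarith
      _ = 3 * μ * σ := by ring
  have key : R (F θ w) - R (F θ' w) ≤ 3 * μ * σ ^ 2 := by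
    calc R (F θ w) - R (F θ' w) ≤ σ * ‖F θ w - F θ' w‖ := hmv _ _
      _ ≤ σ * (3 * μ * σ) := by
          exact mul_le_mul_of_nonneg_left hdist hσ
      _ = 3 * μ * σ ^ 2 := by ring
  nlinarith [sq_nonneg σ, sq_nonneg μ, mul_nonneg (mul_nonneg hL (sq_nonneg μ)) (sq_nonneg σ)]
end

section
/- Let W be a real inner product space and let φ, ψ : W → ℝ be differentiable functions such that φ has L-Lipschitz gradient (L ≥ 0) and both gradients are uniformly bounded: ‖∇φ(w)‖ ≤ B and ‖∇ψ(w)‖ ≤ B for all w ∈ W, where B = μ·σ·σ′. Let α ≥ 0 and suppose w⁺ = w − α·∇ψ(w). Then φ(w⁺) − φ(w) ≤ ((L·α²)/2 − α)·‖∇ψ(w)‖² + 2·α·μ²·σ²·σ′². -/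
/-!
The update `w⁺ = w - α ∇ψ(w)` moves along `∇ψ`, not along `∇φ`. The descent lemma for the
`L`-smooth `φ` gives `φ(w⁺) - φ(w) ≤ -α ⟪∇φ(w), ∇ψ(w)⟫ + L α² ‖∇ψ(w)‖² / 2`, and the mismatch
`⟪∇ψ(w) - ∇φ(w), ∇ψ(w)⟫` between the two gradients costs at most `2B²` by Cauchy–Schwarz.
-/

open RealInnerProductSpace

section

variable {W : Type*} [NormedAddCommGroup W] [InnerProductSpace ℝ W]

theorem inner_gradient_sub_le_of_lipschitz {φ' : W → W} {L : ℝ}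
    (hφ' : ∀ w₁ w₂, ‖φ' w₁ - φ' w₂‖ ≤ L * ‖w₁ - w₂‖) {t : ℝ} (ht : 0 ≤ t) (x d : W) :
    ⟪φ' (x + t • d), d⟫ - ⟪φ' x, d⟫ ≤ L * t * ‖d‖ ^ 2 :=
  calc ⟪φ' (x + t • d), d⟫ - ⟪φ' x, d⟫ = ⟪φ' (x + t • d) - φ' x, d⟫ := (inner_sub_left ..).symm
    _ ≤ ‖φ' (x + t • d) - φ' x‖ * ‖d‖ := real_inner_le_norm _ _
    _ ≤ L * ‖x + t • d - x‖ * ‖d‖ := by gcongr; exact hφ' _ _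
    _ = L * t * ‖d‖ ^ 2 := by
      rw [add_sub_cancel_left, norm_smul, Real.norm_of_nonneg ht]; ring

/-- The descent lemma. Instead of integrating `φ'` along the segment, observe that
`t ↦ φ (x + t • d) - t ⟪φ' x, d⟫ - L t² ‖d‖² / 2` has nonpositive derivative for `t ≥ 0`. -/
theorem sub_le_inner_add_of_lipschitz_gradient {φ : W → ℝ} {φ' : W → W} {L : ℝ}
    (hφ : ∀ w, HasFDerivAt φ (innerSL ℝ (φ' w)) w)
    (hφ' : ∀ w₁ w₂, ‖φ' w₁ - φ' w₂‖ ≤ L * ‖w₁ - w₂‖) (x y : W) :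
    φ y - φ x ≤ ⟪φ' x, y - x⟫ + L / 2 * ‖y - x‖ ^ 2 := by
  set d := y - x
  let g : ℝ → ℝ := fun t ↦ φ (x + t • d) - t * ⟪φ' x, d⟫ - L / 2 * t ^ 2 * ‖d‖ ^ 2
  let g' : ℝ → ℝ := fun t ↦ ⟪φ' (x + t • d), d⟫ - ⟪φ' x, d⟫ - L * t * ‖d‖ ^ 2
  have hg : ∀ t, HasDerivAt g (g' t) t := by
    intro t
    have hline : HasDerivAt (fun t : ℝ ↦ x + t • d) d t := by
      simpa using ((hasDerivAt_id t).smul_const d).const_add x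
    refine ((((hφ _).comp_hasDerivAt t hline).sub
      ((hasDerivAt_id t).mul_const ⟪φ' x, d⟫)).sub
      (((hasDerivAt_pow 2 t).const_mul (L / 2)).mul_const (‖d‖ ^ 2))).congr_deriv ?_
    simp only [innerSL_apply_apply, g']
    ring
  have hanti : AntitoneOn g (Set.Ici 0) :=
    antitoneOn_of_hasDerivWithinAt_nonpos (convex_Ici 0)
      (fun t _ ↦ (hg t).continuousAt.continuousWithinAt)
      (fun t _ ↦ (hg t).hasDerivWithinAt)
      (fun t ht ↦ by
        rw [interior_Ici] at ht
        exact sub_nonpos.2 (inner_gradient_sub_le_of_lipschitz hφ' (le_of_lt ht) x d))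
  have h01 : g 1 ≤ g 0 := hanti Set.self_mem_Ici (Set.mem_Ici.2 zero_le_one) zero_le_one
  norm_num [g, d] at h01
  linarith

theorem sub_le_of_gradient_step {φ : W → ℝ} {φ' : W → W} {L : ℝ}
    (hφ : ∀ w, HasFDerivAt φ (innerSL ℝ (φ' w)) w)
    (hφ' : ∀ w₁ w₂, ‖φ' w₁ - φ' w₂‖ ≤ L * ‖w₁ - w₂‖) (α : ℝ) (x v : W) :
    φ (x - α • v) - φ x ≤ -(α * ⟪φ' x, v⟫) + L * α ^ 2 / 2 * ‖v‖ ^ 2 := by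
  have h := sub_le_inner_add_of_lipschitz_gradient hφ hφ' x (x - α • v)
  rwa [sub_sub_cancel_left, inner_neg_right, real_inner_smul_right, norm_neg, norm_smul,
    Real.norm_eq_abs, mul_pow, sq_abs, ← mul_assoc, div_mul_eq_mul_div] at h

theorem norm_sq_le_inner_add_of_norm_le {u v : W} {B : ℝ} (hu : ‖u‖ ≤ B) (hv : ‖v‖ ≤ B) :
    ‖v‖ ^ 2 ≤ ⟪u, v⟫ + 2 * B ^ 2 := by
  have hB : 0 ≤ B := (norm_nonneg v).trans hv
  have h : ⟪v - u, v⟫ ≤ 2 * B ^ 2 :=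
    calc ⟪v - u, v⟫ ≤ ‖v - u‖ * ‖v‖ := real_inner_le_norm _ _
      _ ≤ (B + B) * B := by gcongr; exact (norm_sub_le _ _).trans (add_le_add hv hu)
      _ = 2 * B ^ 2 := by ring
  rw [inner_sub_left, real_inner_self_eq_norm_sq] at h
  linarith

end

theorem outer_update_bound_general
    {W : Type*} [NormedAddCommGroup W] [InnerProductSpace ℝ W]
    (φ : W → ℝ) (φ' ψ' : W → W) (L : ℝ)
    (hφdiff : ∀ w, HasFDerivAt φ (innerSL ℝ (φ' w)) w)
    (hφlip : ∀ w₁ w₂, ‖φ' w₁ - φ' w₂‖ ≤ L * ‖w₁ - w₂‖)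
    (μ σ σ' B : ℝ) (hB : B = μ * σ * σ')
    (hφbound : ∀ w, ‖φ' w‖ ≤ B)
    (hψbound : ∀ w, ‖ψ' w‖ ≤ B)
    (α : ℝ) (hα : 0 ≤ α)
    (w wplus : W) (hwplus : wplus = w - α • ψ' w) :
    φ wplus - φ w ≤ (L * α ^ 2 / 2 - α) * ‖ψ' w‖ ^ 2 + 2 * α * μ ^ 2 * σ ^ 2 * σ' ^ 2 := by
  have hstep := sub_le_of_gradient_step hφdiff hφlip α w (ψ' w)
  have hinner := mul_le_mul_of_nonneg_left
    (norm_sq_le_inner_add_of_norm_le (hφbound w) (hψbound w)) hα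
  rw [hB] at hinner
  rw [hwplus]
  linarith

/-- Eqn. (31) in the proof of Theorem 2: if `φ` has an `L`-Lipschitz gradient `φ'`,
both `‖φ' w‖ ≤ B` and `‖ψ' w‖ ≤ B` with `B = μ * σ * σ'`, and
`w⁺ = w - α • ψ' w`, then
`φ w⁺ - φ w ≤ (L α² / 2 - α) ‖ψ' w‖² + 2 α μ² σ² σ'²`. -/
theorem outer_update_bound
    {W : Type*} [NormedAddCommGroup W] [InnerProductSpace ℝ W]
    (φ ψ : W → ℝ) (φ' ψ' : W → W) (L : ℝ) (hL : 0 ≤ L)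
    (hφdiff : ∀ w, HasFDerivAt φ (innerSL ℝ (φ' w)) w)
    (hψdiff : ∀ w, HasFDerivAt ψ (innerSL ℝ (ψ' w)) w)
    (hφlip : ∀ w₁ w₂, ‖φ' w₁ - φ' w₂‖ ≤ L * ‖w₁ - w₂‖)
    (μ σ σ' B : ℝ) (hB : B = μ * σ * σ')
    (hφbound : ∀ w, ‖φ' w‖ ≤ B)
    (hψbound : ∀ w, ‖ψ' w‖ ≤ B)
    (α : ℝ) (hα : 0 ≤ α)
    (w wplus : W) (hwplus : wplus = w - α • ψ' w) :
    φ wplus - φ w ≤ (L * α ^ 2 / 2 - α) * ‖ψ' w‖ ^ 2 + 2 * α * μ ^ 2 * σ ^ 2 * σ' ^ 2 :=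
  outer_update_bound_general φ φ' ψ' L hφdiff hφlip μ σ σ' B hB hφbound hψbound α hα w wplus hwplus
end

section
/- Let E and W be real inner product spaces, R : E → ℝ differentiable with L-Lipschitz gradient and ‖∇R‖ ≤ σ everywhere, and 𝓛 : E × W → ℝ with ‖∇_θ𝓛(θ; w)‖ ≤ σ for all θ, w; suppose for each θ the map w ↦ ∇_θ𝓛(θ; w) is differentiable with derivative of operator norm at most σ′, and that for each fixed θ the function w ↦ R(F(θ, w)) has L-Lipschitz gradient, where F(θ, w) = θ − μ·∇_θ𝓛(θ; w) with μ ≥ 0. Let sequences (θ_t), (w_t) satisfy θ_{t+1} = F(θ_t, w_{t+1}) and w_{t+1} = w_t − α·∇_w[R(F(θ_t, w))]|_{w = w_t} with α ≥ 0. Then for every t ≥ 1, R(θ_{t+1}) − R(θ_t) ≤ ((L·α²)/2 − α)·‖∇_w R(F(θ_t, w_t))‖² + 3·μ·σ² + (9/2)·L·μ²·σ² + 2·α·μ²·σ²·σ′². -/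
/-!
Split `R θ_{t+1} - R θ_t` at the intermediate point `F θ_t w_t`. From `F θ_t w_t` to
`θ_{t+1} = F θ_t w_{t+1}` is one gradient step of length `α` on the `L`-smooth function
`w ↦ R (F θ_t w)`, which the descent lemma bounds by `(L α² / 2 - α) ‖∇_w‖²`. From `θ_t` to
`F θ_t w_t` is a displacement of norm at most `μ σ` in `θ`, which the descent lemma and
Cauchy–Schwarz bound by `μ σ² + L μ² σ² / 2`. The remaining terms of the claimed bound are
nonnegative.
-/

open RealInnerProductSpace

section LipschitzGradient

variable {V : Type*} [NormedAddCommGroup V] [InnerProductSpace ℝ V]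
  {f : V → ℝ} {g : V → V} {L : ℝ}

lemma inner_add_smul_le_of_lipschitz (hlip : ∀ x y, ‖g x - g y‖ ≤ L * ‖x - y‖)
    (x d : V) {s : ℝ} (hs : 0 ≤ s) :
    ⟪g (x + s • d), d⟫ ≤ ⟪g x, d⟫ + L * s * ‖d‖ ^ 2 := by
  have hcs : ⟪g (x + s • d) - g x, d⟫ ≤ ‖g (x + s • d) - g x‖ * ‖d‖ :=
    real_inner_le_norm _ _
  have hdist : ‖g (x + s • d) - g x‖ ≤ L * (s * ‖d‖) := by
    simpa [norm_smul, abs_of_nonneg hs] using hlip (x + s • d) x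
  rw [inner_sub_left] at hcs
  nlinarith [mul_le_mul_of_nonneg_right hdist (norm_nonneg d)]

lemma sub_le_inner_add_of_lipschitz_gradient_s8
    (hf : ∀ x, HasFDerivAt f (innerSL ℝ (g x)) x)
    (hlip : ∀ x y, ‖g x - g y‖ ≤ L * ‖x - y‖) (x y : V) :
    f y - f x ≤ ⟪g x, y - x⟫ + L / 2 * ‖y - x‖ ^ 2 := by
  set d := y - x
  have hline : ∀ s : ℝ, HasDerivAt (fun s : ℝ => f (x + s • d) - f x) ⟪g (x + s • d), d⟫ s :=
    fun s => ((hf _).comp_hasDerivAt s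
      (((hasDerivAt_id s).smul_const d).const_add x |>.congr_deriv (one_smul ℝ d))).sub_const _
  have hparabola : ∀ s : ℝ, HasDerivAt (fun s : ℝ => s * ⟪g x, d⟫ + L / 2 * s ^ 2 * ‖d‖ ^ 2)
      (⟪g x, d⟫ + L * s * ‖d‖ ^ 2) s := by
    intro s
    refine (((hasDerivAt_id' s).mul_const ⟪g x, d⟫).add
      (((hasDerivAt_pow 2 s).const_mul (L / 2)).mul_const (‖d‖ ^ 2))).congr_deriv ?_
    push_cast
    ring
  -- On `[0, 1]` the derivative of the parabola dominates that of `s ↦ f (x + s • d) - f x`.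
  have key := image_le_of_deriv_right_le_deriv_boundary (a := 0) (b := 1)
    (fun s _ => (hline s).continuousAt.continuousWithinAt)
    (fun s _ => (hline s).hasDerivWithinAt) (by simp)
    (fun s _ => (hparabola s).continuousAt.continuousWithinAt)
    (fun s _ => (hparabola s).hasDerivWithinAt)
    (fun s hs => inner_add_smul_le_of_lipschitz hlip x d hs.1)
    (Set.right_mem_Icc.mpr zero_le_one)
  simpa [d] using key

lemma sub_le_norm_mul_add_of_lipschitz_gradient
    (hf : ∀ x, HasFDerivAt f (innerSL ℝ (g x)) x)
    (hlip : ∀ x y, ‖g x - g y‖ ≤ L * ‖x - y‖) (x v : V) :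
    f (x + v) - f x ≤ ‖g x‖ * ‖v‖ + L / 2 * ‖v‖ ^ 2 := by
  have h := sub_le_inner_add_of_lipschitz_gradient_s8 hf hlip x (x + v)
  rw [add_sub_cancel_left] at h
  linarith [real_inner_le_norm (g x) v]

lemma sub_le_of_gradient_step_s8
    (hf : ∀ x, HasFDerivAt f (innerSL ℝ (g x)) x)
    (hlip : ∀ x y, ‖g x - g y‖ ≤ L * ‖x - y‖) (x : V) (α : ℝ) :
    f (x - α • g x) - f x ≤ (L * α ^ 2 / 2 - α) * ‖g x‖ ^ 2 := by
  have h := sub_le_inner_add_of_lipschitz_gradient_s8 hf hlip x (x - α • g x)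
  rw [sub_sub_cancel_left, inner_neg_right, real_inner_smul_right, real_inner_self_eq_norm_sq,
    norm_neg, norm_smul, mul_pow, Real.norm_eq_abs, sq_abs] at h
  linarith

end LipschitzGradient

theorem per_step_decrease_bound_general
    {E W : Type*} [NormedAddCommGroup E] [InnerProductSpace ℝ E]
    [NormedAddCommGroup W] [InnerProductSpace ℝ W]
    (R : E → ℝ) (R' : E → E) (L σ σ' : ℝ) (hL : 0 ≤ L)
    (hRdiff : ∀ x, HasFDerivAt R (innerSL ℝ (R' x)) x)
    (hRlip : ∀ x y, ‖R' x - R' y‖ ≤ L * ‖x - y‖)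
    (hRbound : ∀ x, ‖R' x‖ ≤ σ)
    (𝓛' : E → W → E)
    (h𝓛bound : ∀ θ₀ w₀, ‖𝓛' θ₀ w₀‖ ≤ σ)
    (μ : ℝ) (hμ : 0 ≤ μ)
    (F : E → W → E) (hF : ∀ θ₀ w₀, F θ₀ w₀ = θ₀ - μ • 𝓛' θ₀ w₀)
    (G : E → W → W)
    (hG : ∀ θ₀ w₀, HasFDerivAt (fun w => R (F θ₀ w)) (innerSL ℝ (G θ₀ w₀)) w₀)
    (hGlip : ∀ θ₀ w₁ w₂, ‖G θ₀ w₁ - G θ₀ w₂‖ ≤ L * ‖w₁ - w₂‖)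
    (θ : ℕ → E) (w : ℕ → W) (α : ℝ) (hα : 0 ≤ α)
    (hθupd : ∀ t, θ (t + 1) = F (θ t) (w (t + 1)))
    (hwupd : ∀ t, w (t + 1) = w t - α • G (θ t) (w t)) :
    ∀ t, 1 ≤ t →
      R (θ (t + 1)) - R (θ t) ≤
        (L * α ^ 2 / 2 - α) * ‖G (θ t) (w t)‖ ^ 2 +
          3 * μ * σ ^ 2 + (9 / 2) * L * μ ^ 2 * σ ^ 2 +
            2 * α * μ ^ 2 * σ ^ 2 * σ' ^ 2 := by
  intro t _
  have hσ : 0 ≤ σ := (norm_nonneg _).trans (hRbound (θ t))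
  have hstep_w : R (θ (t + 1)) - R (F (θ t) (w t)) ≤
      (L * α ^ 2 / 2 - α) * ‖G (θ t) (w t)‖ ^ 2 := by
    rw [hθupd, hwupd]
    exact sub_le_of_gradient_step_s8 (hG (θ t)) (hGlip (θ t)) (w t) α
  have hstep_θ : R (F (θ t) (w t)) - R (θ t) ≤ μ * σ ^ 2 + L / 2 * μ ^ 2 * σ ^ 2 := by
    have hdisp : ‖-(μ • 𝓛' (θ t) (w t))‖ ≤ μ * σ := by
      rw [norm_neg, norm_smul, Real.norm_of_nonneg hμ]
      exact mul_le_mul_of_nonneg_left (h𝓛bound _ _) hμ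
    have h := sub_le_norm_mul_add_of_lipschitz_gradient hRdiff hRlip (θ t) (-(μ • 𝓛' (θ t) (w t)))
    rw [← sub_eq_add_neg, ← hF] at h
    calc _ ≤ _ := h
      _ ≤ σ * (μ * σ) + L / 2 * (μ * σ) ^ 2 := by gcongr; exact hRbound _
      _ = _ := by ring
  have : 0 ≤ α * μ ^ 2 * σ ^ 2 * σ' ^ 2 := by positivity
  nlinarith [mul_nonneg hμ (sq_nonneg σ), mul_nonneg hL (mul_nonneg (sq_nonneg μ) (sq_nonneg σ))]

/-- The per-step decrease bound (Eqn. 32) in the proof of Theorem 2. `G θ₀ w₀` denotes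
the gradient `∇_w R(F(θ₀, w))` at `w = w₀`, where `F θ₀ w₀ = θ₀ - μ • ∇_θ𝓛(θ₀; w₀)`. -/
theorem per_step_decrease_bound
    {E W : Type*} [NormedAddCommGroup E] [InnerProductSpace ℝ E]
    [NormedAddCommGroup W] [InnerProductSpace ℝ W]
    (R : E → ℝ) (R' : E → E) (L σ σ' : ℝ) (hL : 0 ≤ L)
    (hRdiff : ∀ x, HasFDerivAt R (innerSL ℝ (R' x)) x)
    (hRlip : ∀ x y, ‖R' x - R' y‖ ≤ L * ‖x - y‖)
    (hRbound : ∀ x, ‖R' x‖ ≤ σ)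
    (𝓛 : E → W → ℝ) (𝓛' : E → W → E)
    (h𝓛diff : ∀ θ₀ w₀, HasFDerivAt (fun θ => 𝓛 θ w₀) (innerSL ℝ (𝓛' θ₀ w₀)) θ₀)
    (h𝓛bound : ∀ θ₀ w₀, ‖𝓛' θ₀ w₀‖ ≤ σ)
    (D : E → W → (W →L[ℝ] E))
    (hD : ∀ θ₀ w₀, HasFDerivAt (fun w => 𝓛' θ₀ w) (D θ₀ w₀) w₀)
    (hDbound : ∀ θ₀ w₀, ‖D θ₀ w₀‖ ≤ σ')
    (μ : ℝ) (hμ : 0 ≤ μ)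
    (F : E → W → E) (hF : ∀ θ₀ w₀, F θ₀ w₀ = θ₀ - μ • 𝓛' θ₀ w₀)
    (G : E → W → W)
    (hG : ∀ θ₀ w₀, HasFDerivAt (fun w => R (F θ₀ w)) (innerSL ℝ (G θ₀ w₀)) w₀)
    (hGlip : ∀ θ₀ w₁ w₂, ‖G θ₀ w₁ - G θ₀ w₂‖ ≤ L * ‖w₁ - w₂‖)
    (θ : ℕ → E) (w : ℕ → W) (α : ℝ) (hα : 0 ≤ α)
    (hθupd : ∀ t, θ (t + 1) = F (θ t) (w (t + 1)))
    (hwupd : ∀ t, w (t + 1) = w t - α • G (θ t) (w t)) :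
    ∀ t, 1 ≤ t →
      R (θ (t + 1)) - R (θ t) ≤
        (L * α ^ 2 / 2 - α) * ‖G (θ t) (w t)‖ ^ 2 +
          3 * μ * σ ^ 2 + (9 / 2) * L * μ ^ 2 * σ ^ 2 +
            2 * α * μ ^ 2 * σ ^ 2 * σ' ^ 2 :=
  per_step_decrease_bound_general R R' L σ σ' hL hRdiff hRlip hRbound 𝓛' h𝓛bound μ hμ F hF G hG
    hGlip θ w α hα hθupd hwupd
end

section
/- Under the setting of the per-step bound — E, W real inner product spaces; R : E → ℝ with L-Lipschitz gradient (L > 0) and ‖∇R‖ ≤ σ; 𝓛 : E × W → ℝ with ‖∇_θ𝓛‖ ≤ σ, mixed derivative bound σ′, and w ↦ R(F(θ, w)) having L-Lipschitz gradient for each θ; F(θ, w) = θ − μ·∇_θ𝓛(θ; w); updates θ_{t+1} = F(θ_t, w_{t+1}) and w_{t+1} = w_t − α·∇_w R(F(θ_t, w_t)) — let T ≥ 2 be an integer and set the step sizes α = k₁/√T with 0 < k₁ < 2/L and μ = k₂/T with k₂ > 0. Then the smallest squared outer-gradient norm over the first T steps satisfies: min_{1 ≤ t ≤ T} ‖∇_w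 R(F(θ_t, w_t))‖² ≤ (R(θ₁) − R(θ_{T+1}))/(k₁·(√T − 1)) + (σ·k₂/(k₁·(√T − 1)))·(3·σ + (9/2)·L·μ·σ + 2·α·μ·σ·σ′²). -/
/-!
The outer loop is gradient descent on `w ↦ R (F θₜ w)`, whose gradient is `L`-Lipschitz, so the
descent lemma gives `R (F θₜ wₜ₊₁) ≤ R (F θₜ wₜ) - (α - L α² / 2) ‖∇_w R‖²`. The inner step moves
`θₜ` by `μ ‖∇_θ 𝓛‖ ≤ μ σ`, and `R` is `σ`-Lipschitz, so `R (F θₜ wₜ) ≤ R θₜ + μ σ²`. Telescoping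
over `T` steps and bounding the minimum by the average gives
`min ‖∇_w R‖² ≤ (R θ₁ - R θ_{T+1} + T μ σ²) / ((α - L α² / 2) T)`; with the chosen step sizes
`T μ σ² = k₂ σ²` and `(α - L α² / 2) T ≥ k₁ (√T - 1)`, and the remaining terms of the stated
bound only enlarge it, since `σ ≤ 3 σ + (9/2) L μ σ + 2 α μ σ σ'²`.
-/

open RealInnerProductSpace Finset

section LipschitzGradient

variable {V : Type*} [NormedAddCommGroup V] [InnerProductSpace ℝ V] {g : V → ℝ} {g' : V → V}

theorem sub_le_mul_norm_sub_of_norm_gradient_le {C : ℝ}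
    (hg : ∀ x, HasFDerivAt g (innerSL ℝ (g' x)) x) (hC : ∀ x, ‖g' x‖ ≤ C) (x y : V) :
    g y - g x ≤ C * ‖y - x‖ :=
  (le_abs_self _).trans <| convex_univ.norm_image_sub_le_of_norm_hasFDerivWithin_le
    (fun z _ => (hg z).hasFDerivWithinAt) (fun z _ => (innerSL_apply_norm ℝ (g' z)).trans_le (hC z))
    (Set.mem_univ x) (Set.mem_univ y)

variable {L : ℝ}

theorem le_add_inner_add_sq_of_lipschitz_gradient_s10
    (hg : ∀ x, HasFDerivAt g (innerSL ℝ (g' x)) x)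
    (hlip : ∀ x y, ‖g' x - g' y‖ ≤ L * ‖x - y‖) (x y : V) :
    g y ≤ g x + ⟪g' x, y - x⟫ + L / 2 * ‖y - x‖ ^ 2 := by
  set d := y - x
  -- `ψ` is antitone on `[0, 1]` because `⟪g' (x + t d) - g' x, d⟫ ≤ L t ‖d‖²`.
  set ψ : ℝ → ℝ := fun t => g (x + t • d) - t * ⟪g' x, d⟫ - L / 2 * t ^ 2 * ‖d‖ ^ 2
  have hψ : ∀ t : ℝ, HasDerivAt ψ (⟪g' (x + t • d), d⟫ - ⟪g' x, d⟫ - L * t * ‖d‖ ^ 2) t := by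
    intro t
    have hline : HasDerivAt (fun t : ℝ => x + t • d) d t := by
      simpa using ((hasDerivAt_id t).smul_const d).const_add x
    refine ((((hg _).comp_hasDerivAt t hline).sub ((hasDerivAt_id t).mul_const ⟪g' x, d⟫)).sub
      (((hasDerivAt_pow 2 t).const_mul (L / 2)).mul_const (‖d‖ ^ 2))).congr_deriv ?_
    simp only [innerSL_apply_apply, one_mul, Nat.cast_ofNat]
    ring
  have hanti : AntitoneOn ψ (Set.Icc 0 1) := by
    refine antitoneOn_of_hasDerivWithinAt_nonpos (convex_Icc 0 1)
      (fun t _ => (hψ t).continuousAt.continuousWithinAt) (fun t _ => (hψ t).hasDerivWithinAt) ?_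
    intro t ht
    rw [interior_Icc] at ht
    have hstep : ‖g' (x + t • d) - g' x‖ ≤ L * (t * ‖d‖) := by
      simpa [norm_smul, abs_of_pos ht.1] using hlip (x + t • d) x
    have hcs := real_inner_le_norm (g' (x + t • d) - g' x) d
    rw [inner_sub_left] at hcs
    nlinarith [norm_nonneg d]
  have h01 := hanti (by simp) (by simp) zero_le_one
  simp only [ψ, one_smul, zero_smul, add_zero, one_pow, zero_pow two_ne_zero, one_mul,
    zero_mul, mul_zero, sub_zero, mul_one, d, add_sub_cancel] at h01
  linarith

theorem le_sub_mul_sq_of_gradient_step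
    (hg : ∀ x, HasFDerivAt g (innerSL ℝ (g' x)) x)
    (hlip : ∀ x y, ‖g' x - g' y‖ ≤ L * ‖x - y‖) (x : V) (α : ℝ) :
    g (x - α • g' x) ≤ g x - (α - L * α ^ 2 / 2) * ‖g' x‖ ^ 2 := by
  have h := le_add_inner_add_sq_of_lipschitz_gradient_s10 hg hlip x (x - α • g' x)
  rw [sub_sub_cancel_left, inner_neg_right, real_inner_smul_right, real_inner_self_eq_norm_sq,
    norm_neg, norm_smul, mul_pow, Real.norm_eq_abs, sq_abs] at h
  linarith

end LipschitzGradient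

theorem add_mul_sum_Icc_le_of_forall_le_sub {a b : ℕ → ℝ} {c e : ℝ}
    (h : ∀ t, a (t + 1) ≤ a t + e - c * b t) (n : ℕ) :
    a (n + 1) + c * ∑ t ∈ Icc 1 n, b t ≤ a 1 + n * e := by
  induction n with
  | zero => simp
  | succ n ih =>
    rw [sum_Icc_succ_top (by omega), mul_add]
    push_cast
    linarith [h (n + 1)]

theorem inf'_Icc_le_div_of_forall_le_sub {a b : ℕ → ℝ} {c d e : ℝ}
    (h : ∀ t, a (t + 1) ≤ a t + e - c * b t) (hb : ∀ t, 0 ≤ b t)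
    {T : ℕ} (hT : 1 ≤ T) (hd : 0 < d) (hdc : d ≤ c * T) :
    (Icc 1 T).inf' (nonempty_Icc.mpr hT) b ≤ (a 1 - a (T + 1) + T * e) / d := by
  set m := (Icc 1 T).inf' (nonempty_Icc.mpr hT) b
  have hm : 0 ≤ m := le_inf' _ _ fun t _ => hb t
  have hc : 0 ≤ c := by
    by_contra! hc
    nlinarith [(Nat.cast_nonneg T : (0 : ℝ) ≤ T)]
  have havg : T * m ≤ ∑ t ∈ Icc 1 T, b t := by
    simpa [nsmul_eq_mul] using card_nsmul_le_sum (Icc 1 T) b m fun t ht => inf'_le b ht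
  rw [le_div_iff₀ hd]
  nlinarith [add_mul_sum_Icc_le_of_forall_le_sub h T, mul_le_mul_of_nonneg_left havg hc,
    mul_le_mul_of_nonneg_left hdc hm]

theorem mul_sqrt_sub_one_le_step_coeff_mul {L k : ℝ} {T : ℕ} (hT : 0 < T) (hk : 0 ≤ k)
    (hLk : L * k ≤ 2) :
    k * (Real.sqrt T - 1) ≤ (k / Real.sqrt T - L * (k / Real.sqrt T) ^ 2 / 2) * T := by
  have hs : 0 < Real.sqrt T := Real.sqrt_pos.2 (by exact_mod_cast hT)
  have hsq : Real.sqrt T ^ 2 = T := Real.sq_sqrt (Nat.cast_nonneg T)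
  have hrhs : (k / Real.sqrt T - L * (k / Real.sqrt T) ^ 2 / 2) * T
      = k * Real.sqrt T - L * k ^ 2 / 2 := by
    field_simp
    rw [hsq]
    ring
  rw [hrhs]
  nlinarith

/-- The final estimate in the proof of Theorem 2 (Convergence rate): with step sizes
`α = k₁ / √T` (`0 < k₁ < 2/L`) and `μ = k₂ / T` (`k₂ > 0`), the smallest squared
outer-gradient norm over the first `T` steps satisfies
`min_{1 ≤ t ≤ T} ‖∇_w R(F(θ_t, w_t))‖²
  ≤ (R θ₁ - R θ_{T+1}) / (k₁ (√T - 1))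
    + (σ k₂ / (k₁ (√T - 1))) (3 σ + (9/2) L μ σ + 2 α μ σ σ'²)`. -/
theorem convergence_rate_bound
    {E W : Type*} [NormedAddCommGroup E] [InnerProductSpace ℝ E]
    [NormedAddCommGroup W] [InnerProductSpace ℝ W]
    (R : E → ℝ) (R' : E → E) (L σ σ' : ℝ) (hL : 0 < L)
    (hRdiff : ∀ x, HasFDerivAt R (innerSL ℝ (R' x)) x)
    (hRbound : ∀ x, ‖R' x‖ ≤ σ)
    (𝓛' : E → W → E)
    (h𝓛bound : ∀ θ₀ w₀, ‖𝓛' θ₀ w₀‖ ≤ σ)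
    (μ : ℝ)
    (F : E → W → E) (hF : ∀ θ₀ w₀, F θ₀ w₀ = θ₀ - μ • 𝓛' θ₀ w₀)
    (G : E → W → W)
    (hG : ∀ θ₀ w₀, HasFDerivAt (fun w => R (F θ₀ w)) (innerSL ℝ (G θ₀ w₀)) w₀)
    (hGlip : ∀ θ₀ w₁ w₂, ‖G θ₀ w₁ - G θ₀ w₂‖ ≤ L * ‖w₁ - w₂‖)
    (θ : ℕ → E) (w : ℕ → W) (α : ℝ)
    (hθupd : ∀ t, θ (t + 1) = F (θ t) (w (t + 1)))
    (hwupd : ∀ t, w (t + 1) = w t - α • G (θ t) (w t))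
    (T : ℕ) (hT : 2 ≤ T)
    (k₁ k₂ : ℝ) (hk₁ : 0 < k₁) (hk₁L : k₁ < 2 / L) (hk₂ : 0 < k₂)
    (hα : α = k₁ / Real.sqrt T) (hμ : μ = k₂ / T) :
    (Finset.Icc 1 T).inf' (Finset.nonempty_Icc.mpr (by omega))
        (fun t => ‖G (θ t) (w t)‖ ^ 2) ≤
      (R (θ 1) - R (θ (T + 1))) / (k₁ * (Real.sqrt T - 1)) +
        (σ * k₂ / (k₁ * (Real.sqrt T - 1))) *
          (3 * σ + (9 / 2) * L * μ * σ + 2 * α * μ * σ * σ' ^ 2) := by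
  have hσ : 0 ≤ σ := (norm_nonneg _).trans (hRbound 0)
  have hμ₀ : 0 ≤ μ := by rw [hμ]; positivity
  have hα₀ : 0 ≤ α := by rw [hα]; positivity
  have hLk₁ : L * k₁ ≤ 2 := by rw [lt_div_iff₀ hL] at hk₁L; linarith
  have hstep : ∀ t, R (θ (t + 1)) ≤
      R (θ t) + μ * σ ^ 2 - (α - L * α ^ 2 / 2) * ‖G (θ t) (w t)‖ ^ 2 := by
    intro t
    have houter := le_sub_mul_sq_of_gradient_step (hG (θ t)) (hGlip (θ t)) (w t) α
    have hinner : R (F (θ t) (w t)) - R (θ t) ≤ σ * (μ * σ) := by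
      refine (sub_le_mul_norm_sub_of_norm_gradient_le hRdiff hRbound _ _).trans
        (mul_le_mul_of_nonneg_left ?_ hσ)
      rw [hF, sub_sub_cancel_left, norm_neg, norm_smul, Real.norm_eq_abs, abs_of_nonneg hμ₀]
      exact mul_le_mul_of_nonneg_left (h𝓛bound _ _) hμ₀
    rw [hθupd, hwupd]
    linarith
  have hd : 0 < k₁ * (Real.sqrt T - 1) := by
    have : 1 < Real.sqrt T := by rw [Real.lt_sqrt zero_le_one]; exact_mod_cast hT
    exact mul_pos hk₁ (by linarith)
  refine (inf'_Icc_le_div_of_forall_le_sub (a := fun t => R (θ t)) hstep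
    (fun t => sq_nonneg _) (by omega) hd (hα ▸ mul_sqrt_sub_one_le_step_coeff_mul (by omega) hk₁.le hLk₁)).trans ?_
  have hTμ : (T : ℝ) * (μ * σ ^ 2) = σ * k₂ * σ := by rw [hμ]; field_simp
  rw [div_mul_eq_mul_div, ← add_div, hTμ]
  gcongr
  linarith [mul_nonneg (mul_nonneg hL.le hμ₀) hσ,
    mul_nonneg (mul_nonneg (mul_nonneg hα₀ hμ₀) hσ) (sq_nonneg σ')]
end
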